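/- Beltrametti–Cassinelli–Lahti theorem: Let H and H_A be Hilbert spaces, {φ_{kl}} an orthonormal basis of H indexed by k ∈ {1,…,N} and l in a countable index set, ψ a unit vector in H_A, {ψ_k}_{k=1}^N orthonormal vectors in H_A, and {φ'_{kl}} a family of unit vectors in H satisfying ⟨φ'_{kl}, φ'_{kj}⟩ = δ_{lj} for each k. Then the map φ_{kl} ⊗ ψ ↦ φ'_{kl} ⊗ ψ_k extends to an isometry on the closed span of {φ_{kl} ⊗ ψ}, and hence extends to a unitary on H ⊗ H_A when the orthogonal complements have matching dimensions. -/
import Mathlib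


open scoped InnerProductSpace

/-- Beltrametti–Cassinelli–Lahti theorem: Let `H`, `H_A` be Hilbert spaces,
`K` the tensor product Hilbert space with tensor map `t` satisfying
`⟪t a b, t c d⟫ = ⟪a,c⟫⟪b,d⟫`, `{φ k l}` an orthonormal basis of `H` indexed by
`k ∈ Fin N` and `l` in a countable index set `ι`, `ψ` a unit vector of `H_A`,
`{ψA k}` orthonormal vectors in `H_A`, and `{φ' k l}` unit vectors in `H` with
`⟪φ' k l, φ' k j⟫ = δ_{lj}` for each `k`.  Then the map `φ k l ⊗ ψ ↦ φ' k l ⊗ ψA k`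
preserves inner products (the image family being orthonormal) and extends to a linear
isometry on the closed span of `{φ k l ⊗ ψ}`. -/
theorem stmt3 (H HA K : Type*)
    [NormedAddCommGroup H] [InnerProductSpace ℂ H] [CompleteSpace H]
    [NormedAddCommGroup HA] [InnerProductSpace ℂ HA] [CompleteSpace HA]
    [NormedAddCommGroup K] [InnerProductSpace ℂ K] [CompleteSpace K]
    (t : H → HA → K)
    (htens : ∀ (a c : H) (b d : HA), ⟪t a b, t c d⟫_ℂ = ⟪a, c⟫_ℂ * ⟪b, d⟫_ℂ)
    (N : ℕ) (ι : Type*) [Countable ι]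
    (φ : Fin N → ι → H)
    (hφON : Orthonormal ℂ (fun p : Fin N × ι => φ p.1 p.2))
    (hφbasis :
      (Submodule.span ℂ (Set.range fun p : Fin N × ι => φ p.1 p.2)).topologicalClosure = ⊤)
    (ψ : HA) (hψ : ‖ψ‖ = 1)
    (ψA : Fin N → HA) (hψA : Orthonormal ℂ ψA)
    (φ' : Fin N → ι → H)
    (hφ'norm : ∀ k l, ‖φ' k l‖ = 1)
    (hφ'orth : ∀ (k : Fin N) (l j : ι) [Decidable (l = j)],
      ⟪φ' k l, φ' k j⟫_ℂ = if l = j then 1 else 0) :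
    (∀ (k m : Fin N) (l n : ι),
        ⟪t (φ k l) ψ, t (φ m n) ψ⟫_ℂ = ⟪t (φ' k l) (ψA k), t (φ' m n) (ψA m)⟫_ℂ) ∧
    ∃ U : (Submodule.span ℂ
        (Set.range fun p : Fin N × ι => t (φ p.1 p.2) ψ)).topologicalClosure →ₗᵢ[ℂ] K,
      ∀ (k : Fin N) (l : ι)
        (h : t (φ k l) ψ ∈ (Submodule.span ℂ
          (Set.range fun p : Fin N × ι => t (φ p.1 p.2) ψ)).topologicalClosure),
        U ⟨t (φ k l) ψ, h⟩ = t (φ' k l) (ψA k) := by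
  classical
  set P := Fin N × ι
  set v : P → K := fun p => t (φ p.1 p.2) ψ with hv_def
  set w : P → K := fun p => t (φ' p.1 p.2) (ψA p.1) with hw_def
  have hψψ : ⟪ψ, ψ⟫_ℂ = 1 := by
    rw [inner_self_eq_norm_sq_to_K, hψ]; norm_num
  have hφinner : ∀ p q : P, ⟪φ p.1 p.2, φ q.1 q.2⟫_ℂ = if p = q then 1 else 0 := by
    intro p q
    by_cases h : p = q
    · simp [h, hφON.1 q, inner_self_eq_norm_sq_to_K]
    · simp [h, hφON.2 h]
  have hwinner : ∀ p q : P, ⟪w p, w q⟫_ℂ = if p = q then 1 else 0 := by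
    intro p q
    rw [hw_def]
    simp only
    rw [htens]
    by_cases hk : p.1 = q.1
    · have : ⟪ψA p.1, ψA q.1⟫_ℂ = 1 := by
        rw [hk, inner_self_eq_norm_sq_to_K, hψA.1 q.1]; norm_num
      rw [this, mul_one, hk, hφ'orth]
      by_cases hl : p.2 = q.2
      · have hpq : p = q := Prod.ext hk hl
        simp [hl, hpq]
      · have hpq : p ≠ q := fun hh => hl (by rw [hh])
        simp [hl, hpq]
    · have : ⟪ψA p.1, ψA q.1⟫_ℂ = 0 := hψA.2 hk
      rw [this, mul_zero]
      have : p ≠ q := fun h => hk (by rw [h])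
      simp [this]
  have hvinner : ∀ p q : P, ⟪v p, v q⟫_ℂ = if p = q then 1 else 0 := by
    intro p q
    rw [hv_def]
    simp only
    rw [htens, hψψ, mul_one, hφinner]
  have hvON : Orthonormal ℂ v := by
    rw [orthonormal_iff_ite]
    intro p q; rw [hvinner]
  have hwON : Orthonormal ℂ w := by
    rw [orthonormal_iff_ite]
    intro p q; rw [hwinner]
  constructor
  · intro k m l n
    have := hvinner (k, l) (m, n)
    have h2 := hwinner (k, l) (m, n)
    simp only [hv_def, hw_def] at this h2
    rw [this, h2]
  · set S := (Submodule.span ℂ (Set.range v)).topologicalClosure with hS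
    have hmem : ∀ p : P, v p ∈ S :=
      fun p => Submodule.le_topologicalClosure _ (Submodule.subset_span (Set.mem_range_self p))
    set v' : P → S := fun p => ⟨v p, hmem p⟩ with hv'
    have hv'ON : Orthonormal ℂ v' := hvON.codRestrict _ hmem
    have horth : (Submodule.span ℂ (Set.range v'))ᗮ = ⊥ := by
      rw [Submodule.eq_bot_iff]
      rintro ⟨x, hxS⟩ hx
      have hx' : ∀ p : P, ⟪v p, x⟫_ℂ = 0 := by
        intro p
        have := (Submodule.mem_orthogonal _ _).1 hx (v' p)
          (Submodule.subset_span (Set.mem_range_self p))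
        simpa [Submodule.coe_inner, v'] using this
      have hxorth : x ∈ (Submodule.span ℂ (Set.range v))ᗮ := by
        rw [Submodule.mem_orthogonal]
        intro u hu
        induction hu using Submodule.span_induction with
        | mem u hu => obtain ⟨p, rfl⟩ := hu; exact hx' p
        | zero => simp
        | add a b _ _ ha hb => rw [inner_add_left, ha, hb, add_zero]
        | smul c a _ ha => rw [inner_smul_left, ha, mul_zero]
      have hxcl : x ∈ (Submodule.span ℂ (Set.range v))ᗮᗮ := by
        rw [Submodule.orthogonal_orthogonal_eq_closure]
        exact hxS
      have : x = 0 := by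
        have := (Submodule.mem_orthogonal _ _).1 hxcl x hxorth
        simpa [inner_self_eq_zero] using this
      simpa using this
    have hCS : CompleteSpace S := (Submodule.isClosed_topologicalClosure _).completeSpace_coe
    let b : HilbertBasis P ℂ S := HilbertBasis.mkOfOrthogonalEqBot hv'ON horth
    have hb : ∀ p, b p = v' p := by
      intro p
      rw [HilbertBasis.coe_mkOfOrthogonalEqBot]
    let J : lp (fun _ : P => ℂ) 2 →ₗᵢ[ℂ] K := hwON.orthogonalFamily.linearIsometry
    refine ⟨J.comp b.repr.toLinearIsometry, ?_⟩
    intro k l h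
    have hx : (⟨t (φ k l) ψ, h⟩ : S) = b (k, l) := by
      rw [hb]
    show J (b.repr (⟨t (φ k l) ψ, h⟩ : S)) = _
    rw [hx, b.repr_self]
    have happ := hwON.orthogonalFamily.linearIsometry_apply_single (i := ((k, l) : P)) (1 : ℂ)
    show J (lp.single 2 ((k, l) : P) (1 : ℂ)) = _
    rw [happ, LinearIsometry.toSpanSingleton_apply, one_smul]
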